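/- arXiv:1308.2475 — 4 statements merged into one kernel-verified Lean document; each statement's English description precedes it below -/
import Mathlib

section
/- Let A be an n×n real symmetric positive semi-definite matrix with strictly positive diagonal entries a_{j,j} > 0 for all j, and define K_H := max_j ( Σ_{k≠j} a_{k,j}² ) / a_{j,j}². Let ε, δ ∈ (0,1). If the sample size N satisfies N > 2 K_H ε⁻² ln(2/δ), then the Hutchinson trace estimator satisfies Pr(|tr_H^N(A) − tr(A)| ≤ ε·tr(A)) ≥ 1 − δ. -/
open MeasureTheory Matrix

/-- The sign `+1`/`-1` associated to a Boolean coin flip; a uniform Boolean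
gives a Rademacher random variable. -/
noncomputable def rademacherSign (b : Bool) : ℝ := if b then 1 else -1

/-- The Hutchinson trace estimator `tr_H^N(A) = (1/N) ∑ᵢ wᵢᵗ A wᵢ`, where the
`N` Rademacher vectors `wᵢ` are encoded by a point `ω` of the sample space
`Fin N → Fin n → Bool`. -/
noncomputable def hutchinsonEstimator (n N : ℕ) (A : Matrix (Fin n) (Fin n) ℝ)
    (ω : Fin N → Fin n → Bool) : ℝ :=
  (1 / (N : ℝ)) * ∑ i : Fin N,
    (fun j => rademacherSign (ω i j)) ⬝ᵥ A.mulVec (fun j => rademacherSign (ω i j))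

/-- The uniform probability measure on `Fin N → Fin n → Bool`, i.e. `N` independent
vectors each with `n` i.i.d. Rademacher components. -/
noncomputable def rademacherMeasure (n N : ℕ) : Measure (Fin N → Fin n → Bool) :=
  (PMF.uniformOfFintype (Fin N → Fin n → Bool)).toMeasure

/-!
With `s ∈ {±1}ⁿ` and `B = A - diag A`, one sample deviates from the trace by
`sᵀ B s = ∑ⱼ sⱼ (sᵀ B)ⱼ`. Writing this as a convex combination with weights
`pⱼ = a_jj / tr A`, Jensen's inequality bounds its moment generating function by the average of
those of `sⱼ (sᵀ B)ⱼ / pⱼ`. Since `(sᵀ B)ⱼ` does not involve `sⱼ`, flipping the other signs by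
`sⱼ` removes that factor, and `cosh x ≤ exp (x² / 2)` makes each term sub-Gaussian with variance
proxy `(tr A)² K_H`. A Chernoff bound for the `N` independent samples gives the two-sided tail
`2 exp (-N ε² / (2 K_H))`.
-/
open Finset Real

section Rademacher

variable {ι : Type*} [Fintype ι] [DecidableEq ι]

lemma rademacherSign_mul_self (b : Bool) : rademacherSign b * rademacherSign b = 1 := by
  cases b <;> simp [rademacherSign]

lemma rademacherSign_beq (a b : Bool) :
    rademacherSign (a == b) = rademacherSign a * rademacherSign b := by
  cases a <;> cases b <;> simp [rademacherSign]

lemma dotProduct_mulVec_self_eq_trace_add (A : Matrix ι ι ℝ) {s : ι → ℝ}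
    (hs : ∀ k, s k * s k = 1) :
    s ⬝ᵥ A *ᵥ s = A.trace + s ⬝ᵥ (A - diagonal A.diag) *ᵥ s := by
  have hdiag : s ⬝ᵥ diagonal A.diag *ᵥ s = A.trace := by
    simp only [mulVec_diagonal, dotProduct, trace]
    exact sum_congr rfl fun k _ => by rw [mul_left_comm, hs, mul_one]
  rw [sub_mulVec, dotProduct_sub, hdiag, add_sub_cancel]

lemma sum_sq_sub_diagonal_apply (A : Matrix ι ι ℝ) (j : ι) :
    ∑ k, (A - diagonal A.diag) k j ^ 2 = ∑ k ∈ univ.erase j, A k j ^ 2 := by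
  rw [← sum_erase univ (a := j) (by simp)]
  exact sum_congr rfl fun k hk => by simp [diagonal_apply_ne _ (ne_of_mem_erase hk)]

theorem sum_exp_rademacherSign_dotProduct_le (c : ι → ℝ) :
    ∑ w : ι → Bool, exp ((rademacherSign ∘ w) ⬝ᵥ c)
      ≤ 2 ^ Fintype.card ι * exp (∑ k, c k ^ 2 / 2) := by
  calc ∑ w : ι → Bool, exp ((rademacherSign ∘ w) ⬝ᵥ c)
      = ∏ k, ∑ b : Bool, exp (rademacherSign b * c k) := by
        simp only [Fintype.prod_sum, dotProduct, exp_sum, Function.comp_apply]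
    _ = ∏ k, 2 * cosh (c k) := by
        refine prod_congr rfl fun k _ => ?_
        simp only [Fintype.sum_bool, rademacherSign, cosh_eq, if_true, Bool.false_eq_true,
          if_false]
        ring_nf
    _ ≤ ∏ k, 2 * exp (c k ^ 2 / 2) :=
        prod_le_prod (fun k _ => by positivity) fun k _ => by grw [cosh_le_exp_half_sq]
    _ = 2 ^ Fintype.card ι * exp (∑ k, c k ^ 2 / 2) := by
        rw [prod_mul_distrib, prod_const, card_univ, exp_sum]

theorem sum_rademacherSign_mul_dotProduct (f : ℝ → ℝ) {c : ι → ℝ} {j : ι}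
    (hc : c j = 0) :
    ∑ w : ι → Bool, f (rademacherSign (w j) * ((rademacherSign ∘ w) ⬝ᵥ c))
      = ∑ w : ι → Bool, f ((rademacherSign ∘ w) ⬝ᵥ c) := by
  let flip : (ι → Bool) → ι → Bool := fun w k => if k = j then w j else (w k == w j)
  have hflip : Function.Involutive flip := by
    intro w
    ext k
    by_cases hk : k = j
    · simp [flip, hk]
    · simp only [flip, hk, ↓reduceIte]
      cases w k <;> cases w j <;> rfl
  refine Fintype.sum_equiv hflip.toPerm _ _ fun w => congrArg f ?_
  simp only [dotProduct, mul_sum, Function.comp_apply, Function.Involutive.coe_toPerm]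
  refine sum_congr rfl fun k _ => ?_
  by_cases hk : k = j
  · simp [hk, hc]
  · simp only [flip, hk, if_false, rademacherSign_beq]
    ring

theorem sum_exp_mul_rademacher_quadForm_le (B : Matrix ι ι ℝ) (hB : ∀ j, B j j = 0)
    {p : ι → ℝ} (hp : ∀ j, 0 < p j) (hp1 : ∑ j, p j = 1) {K : ℝ}
    (hK : ∀ j, ∑ k, B k j ^ 2 ≤ K * p j ^ 2) (t : ℝ) :
    ∑ w : ι → Bool, exp (t * ((rademacherSign ∘ w) ⬝ᵥ B *ᵥ (rademacherSign ∘ w)))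
      ≤ 2 ^ Fintype.card ι * exp (t ^ 2 * K / 2) := by
  set c : ι → ι → ℝ := fun j k => t / p j * B k j
  have hsplit : ∀ s : ι → ℝ,
      t * (s ⬝ᵥ B *ᵥ s) = ∑ j, p j * (s j * (s ⬝ᵥ c j)) := by
    intro s
    rw [dotProduct_mulVec, dotProduct, mul_sum]
    refine sum_congr rfl fun j _ => ?_
    simp only [vecMul, dotProduct, c, mul_sum]
    rw [sum_mul, mul_sum]
    refine sum_congr rfl fun k _ => ?_
    field_simp [(hp j).ne']
  have hc : ∀ j, ∑ k, c j k ^ 2 / 2 ≤ t ^ 2 * K / 2 := by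
    intro j
    have hpj := hp j
    calc ∑ k, c j k ^ 2 / 2 = t ^ 2 / p j ^ 2 * (∑ k, B k j ^ 2) / 2 := by
          simp only [c, mul_sum, sum_div]
          exact sum_congr rfl fun k _ => by ring
      _ ≤ t ^ 2 / p j ^ 2 * (K * p j ^ 2) / 2 := by gcongr; exact hK j
      _ = t ^ 2 * K / 2 := by field_simp
  calc ∑ w : ι → Bool, exp (t * ((rademacherSign ∘ w) ⬝ᵥ B *ᵥ (rademacherSign ∘ w)))
      ≤ ∑ w : ι → Bool, ∑ j, p j * exp (rademacherSign (w j) * ((rademacherSign ∘ w) ⬝ᵥ c j)) :=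
        sum_le_sum fun w _ => by
          rw [hsplit]
          exact convexOn_exp.map_sum_le (fun j _ => (hp j).le) hp1 fun j _ => Set.mem_univ _
    _ = ∑ j, p j * ∑ w : ι → Bool, exp ((rademacherSign ∘ w) ⬝ᵥ c j) := by
        rw [sum_comm]
        refine sum_congr rfl fun j _ => ?_
        rw [← mul_sum, sum_rademacherSign_mul_dotProduct exp (by simp [c, hB])]
    _ ≤ ∑ j, p j * (2 ^ Fintype.card ι * exp (t ^ 2 * K / 2)) := by
        refine sum_le_sum fun j _ => mul_le_mul_of_nonneg_left ?_ (hp j).le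
        grw [sum_exp_rademacherSign_dotProduct_le, hc j]
    _ = 2 ^ Fintype.card ι * exp (t ^ 2 * K / 2) := by rw [← sum_mul, hp1, one_mul]

end Rademacher

section Chernoff

variable {V : Type*} [Fintype V]

theorem card_le_sum_le_exp_mul_pow (f : V → ℝ) (N : ℕ) (a : ℝ) {t : ℝ} (ht : 0 ≤ t) :
    (#{ω : Fin N → V | a ≤ ∑ i, f (ω i)} : ℝ) ≤ exp (-(t * a)) * (∑ v, exp (t * f v)) ^ N := by
  rw [natCast_card_filter, Fintype.sum_pow, mul_sum]
  refine sum_le_sum fun ω _ => ?_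
  rw [← exp_sum, ← exp_add]
  split_ifs with h
  · refine one_le_exp ?_
    rw [← mul_sum]
    nlinarith
  · positivity

theorem card_le_sum_le_of_sum_exp_le (f : V → ℝ) {σ : ℝ} (hσ : 0 < σ)
    (hf : ∀ t, ∑ v, exp (t * f v) ≤ Fintype.card V * exp (t ^ 2 * σ / 2))
    {N : ℕ} (hN : 0 < N) {a : ℝ} (ha : 0 ≤ a) :
    (#{ω : Fin N → V | a ≤ ∑ i, f (ω i)} : ℝ)
      ≤ Fintype.card V ^ N * exp (-(a ^ 2 / (2 * N * σ))) := by
  set t := a / (N * σ)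
  have hN' : (0 : ℝ) < N := Nat.cast_pos.2 hN
  calc (#{ω : Fin N → V | a ≤ ∑ i, f (ω i)} : ℝ)
      ≤ exp (-(t * a)) * (Fintype.card V * exp (t ^ 2 * σ / 2)) ^ N := by
        grw [card_le_sum_le_exp_mul_pow f N a (t := t) (by positivity), hf t]
    _ = Fintype.card V ^ N * exp (-(a ^ 2 / (2 * N * σ))) := by
        rw [mul_pow, ← exp_nat_mul, mul_left_comm, ← exp_add]
        congr 2
        simp only [t]
        field_simp
        ring

theorem card_le_abs_sum_le_of_sum_exp_le (f : V → ℝ) {σ : ℝ} (hσ : 0 < σ)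
    (hf : ∀ t, ∑ v, exp (t * f v) ≤ Fintype.card V * exp (t ^ 2 * σ / 2))
    {N : ℕ} (hN : 0 < N) {a : ℝ} (ha : 0 ≤ a) :
    (#{ω : Fin N → V | a ≤ |∑ i, f (ω i)|} : ℝ)
      ≤ 2 * Fintype.card V ^ N * exp (-(a ^ 2 / (2 * N * σ))) := by
  classical
  have hneg : ∀ t, ∑ v, exp (t * -f v) ≤ Fintype.card V * exp (t ^ 2 * σ / 2) := fun t => by
    simpa only [mul_neg, neg_mul, neg_sq] using hf (-t)
  calc (#{ω : Fin N → V | a ≤ |∑ i, f (ω i)|} : ℝ)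
      ≤ #{ω : Fin N → V | a ≤ ∑ i, f (ω i) ∨ a ≤ ∑ i, -f (ω i)} := by
        gcongr with ω
        rw [sum_neg_distrib]
        exact le_abs.1
    _ ≤ #{ω : Fin N → V | a ≤ ∑ i, f (ω i)} + #{ω : Fin N → V | a ≤ ∑ i, -f (ω i)} := by
        rw [filter_or]
        exact_mod_cast card_union_le _ _
    _ ≤ 2 * Fintype.card V ^ N * exp (-(a ^ 2 / (2 * N * σ))) := by
        grw [card_le_sum_le_of_sum_exp_le f hσ hf hN ha,
          card_le_sum_le_of_sum_exp_le (fun v => -f v) hσ hneg hN ha]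
        linarith

end Chernoff

theorem toMeasure_uniformOfFintype_setOf_le {α : Type*} [Fintype α] [Nonempty α]
    [MeasurableSpace α] [MeasurableSingletonClass α] (P : α → Prop) [DecidablePred P] {r : ℝ}
    (h : (#{x | P x} : ℝ) ≤ r * Fintype.card α) :
    (PMF.uniformOfFintype α).toMeasure {x | P x} ≤ ENNReal.ofReal r := by
  rw [PMF.toMeasure_uniformOfFintype_apply _ (Set.toFinite _).measurableSet]
  refine ENNReal.div_le_of_le_mul ?_
  rw [← ENNReal.ofReal_natCast, ← ENNReal.ofReal_natCast (Fintype.card α),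
    ← ENNReal.ofReal_mul' (Nat.cast_nonneg _)]
  refine ENNReal.ofReal_le_ofReal (le_of_eq_of_le ?_ h)
  simp [Fintype.card_subtype]

section Hutchinson

variable {n : ℕ} (A : Matrix (Fin n) (Fin n) ℝ)

instance (N : ℕ) : IsProbabilityMeasure (rademacherMeasure n N) :=
  PMF.toMeasure.isProbabilityMeasure _

lemma hutchinsonEstimator_sub_trace {N : ℕ} (hN : 0 < N) (ω : Fin N → Fin n → Bool) :
    hutchinsonEstimator n N A ω - A.trace
      = (∑ i, (rademacherSign ∘ ω i) ⬝ᵥ (A - diagonal A.diag) *ᵥ (rademacherSign ∘ ω i)) / N := by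
  unfold hutchinsonEstimator
  rw [sum_congr rfl fun i _ =>
      dotProduct_mulVec_self_eq_trace_add A fun k => rademacherSign_mul_self (ω i k),
    sum_add_distrib, sum_const, card_univ, Fintype.card_fin, nsmul_eq_mul]
  field_simp
  exact add_sub_cancel_left _ _

theorem rademacherMeasure_lt_abs_hutchinsonEstimator_sub_trace_le (hn : 0 < n)
    (hdiag : ∀ j, 0 < A j j) {K : ℝ} (hK0 : 0 < K)
    (hK : ∀ j, (∑ k ∈ univ.erase j, A k j ^ 2) / A j j ^ 2 ≤ K) {N : ℕ} (hN : 0 < N) {ε : ℝ}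
    (hε : 0 < ε) :
    rademacherMeasure n N {ω | ε * A.trace < |hutchinsonEstimator n N A ω - A.trace|}
      ≤ ENNReal.ofReal (2 * exp (-(N * ε ^ 2 / (2 * K)))) := by
  set T := A.trace
  have hT : 0 < T := sum_pos (fun j _ => hdiag j) ⟨⟨0, hn⟩, mem_univ _⟩
  set D : (Fin n → Bool) → ℝ := fun w =>
    (rademacherSign ∘ w) ⬝ᵥ (A - diagonal A.diag) *ᵥ (rademacherSign ∘ w)
  have hD : ∀ t, ∑ w, exp (t * D w)
      ≤ Fintype.card (Fin n → Bool) * exp (t ^ 2 * (T ^ 2 * K) / 2) := by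
    intro t
    have hcol : ∀ j, ∑ k, (A - diagonal A.diag) k j ^ 2 ≤ T ^ 2 * K * (A j j / T) ^ 2 := by
      intro j
      rw [sum_sq_sub_diagonal_apply, show T ^ 2 * K * (A j j / T) ^ 2 = K * A j j ^ 2 by
        field_simp]
      exact (div_le_iff₀ (pow_pos (hdiag j) 2)).1 (hK j)
    simpa [Fintype.card_fun] using sum_exp_mul_rademacher_quadForm_le _ (by simp)
      (fun j => div_pos (hdiag j) hT) (by rw [← sum_div]; exact div_self hT.ne') hcol t
  have hN' : (0 : ℝ) < N := Nat.cast_pos.2 hN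
  have hcount := card_le_abs_sum_le_of_sum_exp_le D (by positivity) hD hN
    (a := N * (ε * T)) (by positivity)
  refine toMeasure_uniformOfFintype_setOf_le _ ?_
  calc (#{ω | ε * T < |hutchinsonEstimator n N A ω - T|} : ℝ)
      ≤ #{ω : Fin N → Fin n → Bool | N * (ε * T) ≤ |∑ i, D (ω i)|} := by
        gcongr with ω
        rw [hutchinsonEstimator_sub_trace A hN, abs_div, Nat.abs_cast, lt_div_iff₀ hN']
        intro h
        linarith
    _ ≤ 2 * Fintype.card (Fin n → Bool) ^ N
          * exp (-((N * (ε * T)) ^ 2 / (2 * N * (T ^ 2 * K)))) := hcount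
    _ = 2 * exp (-(N * ε ^ 2 / (2 * K))) * Fintype.card (Fin N → Fin n → Bool) := by
        have hexp : (N * (ε * T)) ^ 2 / (2 * N * (T ^ 2 * K)) = N * ε ^ 2 / (2 * K) := by
          field_simp
        rw [hexp]
        simp only [Fintype.card_fun, Fintype.card_fin, Nat.cast_pow]
        ring

theorem ofReal_one_sub_le_rademacherMeasure_abs_hutchinsonEstimator_sub_trace_le (hn : 0 < n)
    (hdiag : ∀ j, 0 < A j j) {K : ℝ} (hK0 : 0 < K)
    (hK : ∀ j, (∑ k ∈ univ.erase j, A k j ^ 2) / A j j ^ 2 ≤ K) {N : ℕ} (hN : 0 < N) {ε : ℝ}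
    (hε : 0 < ε) :
    ENNReal.ofReal (1 - 2 * exp (-(N * ε ^ 2 / (2 * K))))
      ≤ rademacherMeasure n N {ω | |hutchinsonEstimator n N A ω - A.trace| ≤ ε * A.trace} := by
  have hgood : {ω | |hutchinsonEstimator n N A ω - A.trace| ≤ ε * A.trace}
      = {ω | ε * A.trace < |hutchinsonEstimator n N A ω - A.trace|}ᶜ := by
    ext ω
    simp only [Set.mem_compl_iff, Set.mem_ofPred_eq, not_lt]
  rw [hgood, prob_compl_eq_one_sub (Set.toFinite _).measurableSet,
    ENNReal.ofReal_sub _ (by positivity), ENNReal.ofReal_one]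
  exact tsub_le_tsub_left
    (rademacherMeasure_lt_abs_hutchinsonEstimator_sub_trace_le A hn hdiag hK0 hK hN hε) 1

end Hutchinson

theorem hutchinson_matrix_dependent_bound_general (n N : ℕ) (hn : 0 < n)
    (A : Matrix (Fin n) (Fin n) ℝ)
    (hdiag : ∀ j, 0 < A j j)
    (KH : ℝ)
    (hKH : KH = ⨆ j : Fin n, (∑ k ∈ Finset.univ.erase j, (A k j) ^ 2) / (A j j) ^ 2)
    (ε δ : ℝ) (hε : ε ∈ Set.Ioo (0 : ℝ) 1) (hδ : δ ∈ Set.Ioo (0 : ℝ) 1)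
    (hN : (N : ℝ) > 2 * KH / ε ^ 2 * Real.log (2 / δ)) :
    rademacherMeasure n N
        {ω | |hutchinsonEstimator n N A ω - A.trace| ≤ ε * A.trace}
      ≥ ENNReal.ofReal (1 - δ) := by
  obtain ⟨hε, -⟩ := hε
  obtain ⟨hδ, hδ1⟩ := hδ
  have hlog : 0 < log (2 / δ) := log_pos (by rw [lt_div_iff₀ hδ]; linarith)
  have hKH0 : 0 ≤ KH := hKH ▸ Real.iSup_nonneg fun j => by positivity
  -- Any `K ≥ KH` may replace `KH`; this choice makes the tail bound equal to `δ` exactly.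
  set K := N * ε ^ 2 / (2 * log (2 / δ))
  have hKHK : KH < K := by
    rw [lt_div_iff₀ (by positivity)]
    rw [gt_iff_lt, div_mul_eq_mul_div, div_lt_iff₀ (by positivity)] at hN
    linarith
  have hN0 : 0 < N := Nat.cast_pos.1 (lt_of_le_of_lt (by positivity) hN)
  have hcol : ∀ j, (∑ k ∈ univ.erase j, A k j ^ 2) / A j j ^ 2 ≤ K := fun j =>
    (hKH ▸ le_ciSup (f := fun j => (∑ k ∈ univ.erase j, A k j ^ 2) / A j j ^ 2)
      (Set.finite_range _).bddAbove j).trans hKHK.le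
  have hδ_eq : 2 * exp (-(N * ε ^ 2 / (2 * K))) = δ := by
    have : N * ε ^ 2 / (2 * K) = log (2 / δ) := by simp only [K]; field_simp
    rw [this, Real.exp_neg, exp_log (by positivity)]
    field_simp
  rw [ge_iff_le, ← hδ_eq]
  exact ofReal_one_sub_le_rademacherMeasure_abs_hutchinsonEstimator_sub_trace_le A hn hdiag
    (hKH0.trans_lt hKHK) hcol hN0 hε

/-- matrix-dependent bound for the Hutchinson estimator. With
`K_H = max_j (∑_{k ≠ j} a_{k,j}²) / a_{j,j}²`, if `N > 2 K_H ε⁻² ln(2/δ)` then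
`Pr(|tr_H^N(A) − tr(A)| ≤ ε tr(A)) ≥ 1 − δ`. -/
theorem hutchinson_matrix_dependent_bound (n N : ℕ) (hn : 0 < n)
    (A : Matrix (Fin n) (Fin n) ℝ) (hA : A.PosSemidef)
    (hdiag : ∀ j, 0 < A j j)
    (KH : ℝ)
    (hKH : KH = ⨆ j : Fin n, (∑ k ∈ Finset.univ.erase j, (A k j) ^ 2) / (A j j) ^ 2)
    (ε δ : ℝ) (hε : ε ∈ Set.Ioo (0 : ℝ) 1) (hδ : δ ∈ Set.Ioo (0 : ℝ) 1)
    (hN : (N : ℝ) > 2 * KH / ε ^ 2 * Real.log (2 / δ)) :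
    rademacherMeasure n N
        {ω | |hutchinsonEstimator n N A ω - A.trace| ≤ ε * A.trace}
      ≥ ENNReal.ofReal (1 - δ) :=
  hutchinson_matrix_dependent_bound_general n N hn A hdiag KH hKH ε δ hε hδ hN
end

section
/- Let A be an n×n real matrix and let N ≥ 1. The uniform unit vector trace estimator with replacement satisfies Var(tr_{U₁}^N(A)) = (1/N) ( n Σ_{j=1}^n a_{jj}² − tr(A)² ). -/
open MeasureTheory Matrix

/-- `unitVec n j` is the `j`-th column of the scaled identity matrix `√n · I`,
i.e. `√n` times the `j`-th standard basis vector of `ℝⁿ`. -/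
noncomputable def unitVec (n : ℕ) (j : Fin n) : Fin n → ℝ :=
  fun k => Real.sqrt n * if k = j then 1 else 0

/-- The unit vector trace estimator `(1/N) ∑ᵢ wᵢᵗ A wᵢ`, where `wᵢ = unitVec n (f i)`
and `f : Fin N → Fin n` records which (scaled) unit vectors were drawn. -/
noncomputable def unitVectorEstimator (n N : ℕ) (A : Matrix (Fin n) (Fin n) ℝ)
    (f : Fin N → Fin n) : ℝ :=
  (1 / (N : ℝ)) * ∑ i : Fin N, (unitVec n (f i)) ⬝ᵥ A.mulVec (unitVec n (f i))

/-- The uniform probability measure on `Fin N → Fin n`: `N` indices drawn independently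
and uniformly, i.e. unit vector sampling with replacement (`U₁`). -/
noncomputable def withReplacementMeasure (n N : ℕ) : Measure (Fin N → Fin n) :=
  (Fintype.card (Fin N → Fin n) : ENNReal)⁻¹ • Measure.count

/-- The uniform probability measure on injective tuples of indices: `N` distinct indices
drawn uniformly without replacement (`U₂`). -/
noncomputable def withoutReplacementMeasure (n N : ℕ) :
    Measure {f : Fin N → Fin n // Function.Injective f} :=
  (Fintype.card {f : Fin N → Fin n // Function.Injective f} : ENNReal)⁻¹ • Measure.count

open ProbabilityTheory
open scoped ENNReal

/-! The estimator is the sample mean of `N` independent uniform draws of `j ↦ n aⱼⱼ`, so its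
variance is `1/N` times the variance of a single draw, which is
`(1/n) ∑ⱼ (n aⱼⱼ)² - ((1/n) ∑ⱼ n aⱼⱼ)² = n ∑ⱼ aⱼⱼ² - tr(A)²`. -/

section Uniform

variable {Ω : Type*} [Fintype Ω] [MeasurableSpace Ω]

lemma uniformOn_univ_eq_smul_count :
    uniformOn (Set.univ : Set Ω) = (Fintype.card Ω : ℝ≥0∞)⁻¹ • Measure.count := by
  ext s _
  rw [uniformOn_univ, Measure.smul_apply, smul_eq_mul, ENNReal.div_eq_inv_mul]

lemma integral_uniformOn_univ [MeasurableSingletonClass Ω] (g : Ω → ℝ) :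
    ∫ x, g x ∂uniformOn Set.univ = (Fintype.card Ω : ℝ)⁻¹ * ∑ x, g x := by
  simp [uniformOn_univ_eq_smul_count, integral_smul_measure]

lemma variance_uniformOn_univ [MeasurableSingletonClass Ω] [Nonempty Ω] (g : Ω → ℝ) :
    Var[g; uniformOn Set.univ] =
      (Fintype.card Ω : ℝ)⁻¹ * ∑ x, g x ^ 2 - ((Fintype.card Ω : ℝ)⁻¹ * ∑ x, g x) ^ 2 := by
  rw [variance_eq_sub MemLp.of_discrete, integral_uniformOn_univ, integral_uniformOn_univ]
  rfl

lemma variance_sampleMean_uniformOn_univ [MeasurableSingletonClass Ω] [Nonempty Ω]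
    {ι : Type*} [Fintype ι] (g : Ω → ℝ) :
    Var[fun f : ι → Ω ↦ (Fintype.card ι : ℝ)⁻¹ * ∑ i, g (f i); uniformOn Set.univ] =
      (Fintype.card ι : ℝ)⁻¹ * Var[g; uniformOn Set.univ] := by
  have hsum : Var[fun f : ι → Ω ↦ ∑ i, g (f i); uniformOn Set.univ] =
      Fintype.card ι * Var[g; uniformOn Set.univ] := by
    rw [← Set.pi_univ, uniformOn_pi]
    simpa [Finset.sum_fn] using variance_sum_pi (μ := fun _ : ι ↦ uniformOn (Set.univ : Set Ω))
      (X := fun _ ↦ g) fun _ ↦ MemLp.of_discrete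
  rw [variance_const_mul, hsum]
  rcases eq_or_ne (Fintype.card ι : ℝ) 0 with h | h
  · simp [h]
  · field_simp

end Uniform

lemma unitVec_dotProduct_mulVec_unitVec {n : ℕ} (A : Matrix (Fin n) (Fin n) ℝ) (j : Fin n) :
    unitVec n j ⬝ᵥ A *ᵥ unitVec n j = n * A j j := by
  simp [unitVec, dotProduct, mulVec, mul_ite, ite_mul, mul_comm, mul_left_comm,
    Real.mul_self_sqrt (Nat.cast_nonneg n)]

lemma unitVectorEstimator_eq_sampleMean (n N : ℕ) (A : Matrix (Fin n) (Fin n) ℝ) :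
    unitVectorEstimator n N A = fun f ↦ (N : ℝ)⁻¹ * ∑ i, n * A (f i) (f i) := by
  ext f
  simp only [unitVectorEstimator, unitVec_dotProduct_mulVec_unitVec, one_div]

lemma withReplacementMeasure_eq_uniformOn (n N : ℕ) :
    withReplacementMeasure n N = uniformOn Set.univ :=
  uniformOn_univ_eq_smul_count.symm

theorem unit_vector_with_replacement_variance_general (n N : ℕ) (A : Matrix (Fin n) (Fin n) ℝ) :
    ProbabilityTheory.variance (unitVectorEstimator n N A) (withReplacementMeasure n N)
      = (1 / (N : ℝ)) * ((n : ℝ) * ∑ j : Fin n, (A j j) ^ 2 - A.trace ^ 2) := by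
  rcases n.eq_zero_or_pos with rfl | hn
  · have hzero : unitVectorEstimator 0 N A = 0 := by
      ext f
      simp [unitVectorEstimator]
    simp [hzero, Matrix.trace]
  have : Nonempty (Fin n) := ⟨⟨0, hn⟩⟩
  have hsample := variance_sampleMean_uniformOn_univ (ι := Fin N) fun j : Fin n ↦ n * A j j
  simp only [Fintype.card_fin] at hsample
  rw [unitVectorEstimator_eq_sampleMean, withReplacementMeasure_eq_uniformOn, hsample,
    variance_uniformOn_univ, Fintype.card_fin, one_div, Matrix.trace]
  have hn0 : (n : ℝ) ≠ 0 := by positivity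
  simp only [Matrix.diag, mul_pow, ← Finset.mul_sum]
  field_simp

/-- the variance of the unit vector trace estimator with replacement is
`Var(tr_{U₁}^N(A)) = (1/N) (n ∑ⱼ aⱼⱼ² − tr(A)²)`. -/
theorem unit_vector_with_replacement_variance (n N : ℕ) (A : Matrix (Fin n) (Fin n) ℝ)
    (hN : 1 ≤ N) :
    ProbabilityTheory.variance (unitVectorEstimator n N A) (withReplacementMeasure n N)
      = (1 / (N : ℝ)) * ((n : ℝ) * ∑ j : Fin n, (A j j) ^ 2 - A.trace ^ 2) :=
  unit_vector_with_replacement_variance_general n N A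
end

section
/- Let A be an n×n real matrix with n ≥ 2 and let 1 ≤ N ≤ n. Then the variances of the unit vector trace estimators without and with replacement are related by Var(tr_{U₂}^N(A)) = ((n−N)/(n−1)) · Var(tr_{U₁}^N(A)); in particular they coincide when N = 1, and the without-replacement variance vanishes when N = n. -/
open MeasureTheory Matrix

/-!
Both estimators are the mean `(1/N) ∑ᵢ q (wᵢ)` of `N` samples of `q j = e_jᵗ A e_j`, so their
variance is `(σ² + (N - 1) c) / N`, where `σ²` is the variance of `q` at a uniformly random index
and `c` is the covariance of two distinct samples. Relabelling the indices (separately in each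
sample with replacement, simultaneously in all samples without) preserves the sampling
distribution, so a single sample is uniform on the indices, and a pair of distinct samples is
uniform on all pairs with replacement and on the pairs of distinct indices without replacement.
Hence `c = 0` in the first case and `c = -σ² / (n - 1)` in the second, so the variances are
`σ² / N` and `σ² (n - N) / (N (n - 1))`.
-/

open ProbabilityTheory Finset
open scoped BigOperators ENNReal

section Exchangeable
variable {Ω ι : Type*} [MeasurableSpace Ω] {μ : Measure Ω} [IsFiniteMeasure μ] [Fintype ι]

theorem variance_average_of_covariance_eq (X : ι → Ω → ℝ) (hX : ∀ i, MemLp (X i) 2 μ)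
    {s c : ℝ} (hs : ∀ i, Var[X i; μ] = s) (hc : ∀ i j, i ≠ j → cov[X i, X j; μ] = c) :
    Var[fun ω ↦ 1 / (Fintype.card ι : ℝ) * ∑ i, X i ω; μ]
      = (s + (Fintype.card ι - 1) * c) / Fintype.card ι := by
  classical
  have hrow (i : ι) : ∑ j, cov[X i, X j; μ] = s + (Fintype.card ι - 1) * c := by
    rw [← add_sum_erase _ _ (mem_univ i), covariance_self (hX i).aemeasurable, hs,
      sum_congr rfl fun j hj ↦ hc i j (ne_of_mem_erase hj).symm, sum_const,
      card_erase_of_mem (mem_univ i), card_univ, nsmul_eq_mul,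
      Nat.cast_pred (Fintype.card_pos_iff.mpr ⟨i⟩)]
  have hmeas : AEMeasurable (fun ω ↦ 1 / (Fintype.card ι : ℝ) * ∑ i, X i ω) μ := by
    have := fun i ↦ (hX i).aemeasurable
    fun_prop
  rw [← covariance_self hmeas, covariance_const_mul_left, covariance_const_mul_right,
    covariance_fun_sum_fun_sum hX hX, sum_congr rfl fun i _ ↦ hrow i, sum_const, card_univ,
    nsmul_eq_mul]
  rcases eq_or_ne (Fintype.card ι : ℝ) 0 with h | h
  · simp [h]
  · field_simp

end Exchangeable

section Uniform
variable {α β : Type*} [Fintype α] [MeasurableSpace α]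

theorem inv_card_smul_count_eq_uniformOn_univ :
    (Fintype.card α : ℝ≥0∞)⁻¹ • (Measure.count : Measure α) = uniformOn Set.univ := by
  simp [uniformOn, ProbabilityTheory.cond, Measure.count_univ]

variable [MeasurableSingletonClass α]

theorem integral_uniformOn_univ_s9 (f : α → ℝ) :
    ∫ x, f x ∂uniformOn Set.univ = 𝔼 x, f x := by
  rw [integral_fintype Integrable.of_finite, Fintype.expect_eq_sum_div_card, sum_div]
  refine sum_congr rfl fun x _ ↦ ?_
  simp [measureReal_def, uniformOn_univ, div_eq_inv_mul, ENNReal.toReal_inv]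

variable [Nonempty α]

theorem covariance_uniformOn_univ (X Y : α → ℝ) :
    cov[X, Y; uniformOn Set.univ] = 𝔼 x, X x * Y x - (𝔼 x, X x) * 𝔼 x, Y x := by
  rw [covariance_eq_sub MemLp.of_discrete MemLp.of_discrete]
  simp only [Pi.mul_apply, integral_uniformOn_univ_s9]

theorem variance_comp_uniformOn_univ [Fintype β] [MeasurableSpace β]
    [MeasurableSingletonClass β] [Nonempty β] (v : α → β)
    (hv : ∀ φ : β → ℝ, 𝔼 x, φ (v x) = 𝔼 b, φ b) (g : β → ℝ) :
    Var[fun x ↦ g (v x); uniformOn Set.univ] = Var[g; uniformOn Set.univ] := by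
  rw [← covariance_self .of_discrete, ← covariance_self .of_discrete, covariance_uniformOn_univ,
    covariance_uniformOn_univ, hv, hv fun b ↦ g b * g b]

end Uniform

section Fibers
variable {α β : Type*} [Fintype α] [DecidableEq β]

theorem card_fiber_eq_of_equiv (v : α → β) (e : α ≃ α) {b b' : β}
    (he : ∀ x, v (e x) = b' ↔ v x = b) :
    #{x | v x = b} = #{x | v x = b'} :=
  card_equiv e fun x ↦ by simp [he]

theorem expect_comp_eq_of_card_fiber_eq [Nonempty α] (v : α → β) (S : Finset β)
    (hv : ∀ x, v x ∈ S) (hfib : ∀ b ∈ S, ∀ b' ∈ S, #{x | v x = b} = #{x | v x = b'})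
    (φ : β → ℝ) :
    𝔼 x, φ (v x) = 𝔼 b ∈ S, φ b := by
  obtain ⟨x₀⟩ := ‹Nonempty α›
  set c := #{x | v x = v x₀}
  have hc (b) (hb : b ∈ S) : #{x | v x = b} = c := hfib b hb _ (hv x₀)
  have hc₀ : (c : ℝ) ≠ 0 :=
    Nat.cast_ne_zero.mpr (card_ne_zero_of_mem (mem_filter.mpr ⟨mem_univ x₀, rfl⟩))
  have hcard : Fintype.card α = #S * c := by
    rw [← card_univ, card_eq_sum_card_fiberwise fun x _ ↦ hv x, sum_congr rfl hc, sum_const,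
      smul_eq_mul]
  have hfiber (b) (hb : b ∈ S) : ∑ x with v x = b, φ (v x) = c * φ b := by
    rw [sum_congr rfl fun x hx ↦ by rw [(mem_filter.mp hx).2], sum_const, hc b hb, nsmul_eq_mul]
  rw [Fintype.expect_eq_sum_div_card, expect_eq_sum_div_card,
    ← sum_fiberwise_of_maps_to fun x _ ↦ hv x, sum_congr rfl hfiber, ← mul_sum, hcard]
  push_cast
  field_simp

end Fibers

theorem sum_offDiag_mul_eq_sq_sub {R γ : Type*} [CommRing R] [DecidableEq γ] (s : Finset γ)
    (g : γ → R) :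
    ∑ p ∈ s.offDiag, g p.1 * g p.2 = (∑ a ∈ s, g a) ^ 2 - ∑ a ∈ s, g a ^ 2 := by
  rw [sq, sum_mul_sum, ← sum_product', ← diag_union_offDiag, sum_union (disjoint_diag_offDiag s),
    sum_diag]
  simp [sq]

section Samples
variable {ι β : Type*}

theorem exists_perm_apply_eq_pair [DecidableEq β] {a b a' b' : β} (hab : a ≠ b)
    (hab' : a' ≠ b') : ∃ σ : Equiv.Perm β, σ a = a' ∧ σ b = b' := by
  set τ := Equiv.swap a a'
  refine ⟨τ.trans (Equiv.swap (τ b) b'), ?_, by simp⟩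
  have hτb : a' ≠ τ b := by
    rw [← Equiv.swap_apply_left a a']
    exact τ.injective.ne hab
  simp [τ, Equiv.swap_apply_of_ne_of_ne hτb hab']

def injectivePostcomp (σ : Equiv.Perm β) :
    {f : ι → β // Function.Injective f} ≃ {f : ι → β // Function.Injective f} :=
  (Equiv.piCongrRight fun _ ↦ σ).subtypeEquiv fun f ↦ (σ.injective.of_comp_iff f).symm

@[simp]
theorem injectivePostcomp_apply_coe (σ : Equiv.Perm β) (x : {f : ι → β // Function.Injective f})
    (i : ι) : (injectivePostcomp σ x).1 i = σ (x.1 i) :=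
  rfl

variable [Fintype ι] [DecidableEq ι] [Fintype β] [DecidableEq β]

theorem expect_apply_pi [Nonempty β] (i : ι) (φ : β → ℝ) :
    𝔼 f : ι → β, φ (f i) = 𝔼 b, φ b := by
  refine expect_comp_eq_of_card_fiber_eq (fun f : ι → β ↦ f i) univ (fun _ ↦ mem_univ _)
    (fun a _ a' _ ↦ card_fiber_eq_of_equiv _ (Equiv.piCongrRight fun _ ↦ Equiv.swap a a')
      fun f ↦ ?_) φ
  simp [Equiv.swap_apply_eq_iff]

theorem expect_apply_apply_pi [Nonempty β] {i j : ι} (hij : i ≠ j) (φ : β × β → ℝ) :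
    𝔼 f : ι → β, φ (f i, f j) = 𝔼 p, φ p := by
  refine expect_comp_eq_of_card_fiber_eq (fun f ↦ (f i, f j)) univ (fun _ ↦ mem_univ _)
    (fun p _ p' _ ↦ card_fiber_eq_of_equiv _
      (Equiv.piCongrRight fun k ↦ if k = i then Equiv.swap p.1 p'.1 else Equiv.swap p.2 p'.2)
      fun f ↦ ?_) φ
  simp [hij.symm, Prod.ext_iff, Equiv.swap_apply_eq_iff]

variable [Nonempty {f : ι → β // Function.Injective f}]

theorem expect_apply_injective (i : ι) (φ : β → ℝ) :
    𝔼 x : {f : ι → β // Function.Injective f}, φ (x.1 i) = 𝔼 b, φ b := by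
  refine expect_comp_eq_of_card_fiber_eq (fun x : {f : ι → β // Function.Injective f} ↦ x.1 i)
    univ (fun _ ↦ mem_univ _)
    (fun a _ a' _ ↦ card_fiber_eq_of_equiv _ (injectivePostcomp (Equiv.swap a a'))
      fun x ↦ ?_) φ
  simp [Equiv.swap_apply_eq_iff]

theorem expect_apply_apply_injective {i j : ι} (hij : i ≠ j) (φ : β × β → ℝ) :
    𝔼 x : {f : ι → β // Function.Injective f}, φ (x.1 i, x.1 j) = 𝔼 p ∈ univ.offDiag, φ p := by
  refine expect_comp_eq_of_card_fiber_eq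
    (fun x : {f : ι → β // Function.Injective f} ↦ (x.1 i, x.1 j)) univ.offDiag
    (fun x ↦ by simpa using x.2.ne hij) (fun p hp p' hp' ↦ ?_) φ
  obtain ⟨σ, hσ₁, hσ₂⟩ := exists_perm_apply_eq_pair (mem_offDiag.mp hp).2.2
    (mem_offDiag.mp hp').2.2
  refine card_fiber_eq_of_equiv _ (injectivePostcomp σ) fun x ↦ ?_
  simp [Prod.ext_iff, ← hσ₁, ← hσ₂]

end Samples

section SampleMoments
variable {ι β : Type*} [Fintype ι] [DecidableEq ι] [Fintype β] [DecidableEq β] [Nonempty β]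
  [MeasurableSpace β] [MeasurableSingletonClass β]

theorem variance_apply_pi (i : ι) (g : β → ℝ) :
    Var[fun f : ι → β ↦ g (f i); uniformOn Set.univ] = Var[g; uniformOn Set.univ] :=
  variance_comp_uniformOn_univ _ (expect_apply_pi i) g

theorem covariance_apply_apply_pi {i j : ι} (hij : i ≠ j) (g : β → ℝ) :
    cov[fun f : ι → β ↦ g (f i), fun f ↦ g (f j); uniformOn Set.univ] = 0 := by
  rw [covariance_uniformOn_univ, expect_apply_apply_pi hij fun p ↦ g p.1 * g p.2,
    expect_apply_pi, expect_apply_pi, Fintype.expect_mul_expect, ← expect_product',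
    univ_product_univ, sub_self]

variable [Nonempty {f : ι → β // Function.Injective f}]

theorem variance_apply_injective (i : ι) (g : β → ℝ) :
    Var[fun x : {f : ι → β // Function.Injective f} ↦ g (x.1 i); uniformOn Set.univ]
      = Var[g; uniformOn Set.univ] :=
  variance_comp_uniformOn_univ _ (expect_apply_injective i) g

theorem covariance_apply_apply_injective {i j : ι} (hij : i ≠ j) (g : β → ℝ) :
    cov[fun x : {f : ι → β // Function.Injective f} ↦ g (x.1 i), fun x ↦ g (x.1 j);
      uniformOn Set.univ] = -Var[g; uniformOn Set.univ] / (Fintype.card β - 1) := by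
  obtain ⟨x⟩ := ‹Nonempty {f : ι → β // Function.Injective f}›
  have hβ : (1 : ℝ) < Fintype.card β := by
    exact_mod_cast Fintype.one_lt_card_iff.mpr ⟨x.1 i, x.1 j, x.2.ne hij⟩
  have hn₀ : (Fintype.card β : ℝ) ≠ 0 := by positivity
  have hn₁ : (Fintype.card β : ℝ) - 1 ≠ 0 := sub_ne_zero.mpr hβ.ne'
  rw [covariance_uniformOn_univ, expect_apply_apply_injective hij fun p ↦ g p.1 * g p.2,
    expect_apply_injective, expect_apply_injective, ← covariance_self .of_discrete,
    covariance_uniformOn_univ, expect_eq_sum_div_card, sum_offDiag_mul_eq_sq_sub, offDiag_card,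
    Fintype.expect_eq_sum_div_card, Fintype.expect_eq_sum_div_card, card_univ,
    Nat.cast_sub (Nat.le_mul_self _), Nat.cast_mul]
  rw [show (Fintype.card β : ℝ) * Fintype.card β - Fintype.card β
    = Fintype.card β * (Fintype.card β - 1) by ring]
  field_simp
  ring

end SampleMoments

theorem unit_vector_variance_relation_general (n N : ℕ) (A : Matrix (Fin n) (Fin n) ℝ)
    (hn : 2 ≤ n) (hNn : N ≤ n) :
    (ProbabilityTheory.variance (fun f => unitVectorEstimator n N A f.1)
        (withoutReplacementMeasure n N)
      = (((n : ℝ) - N) / ((n : ℝ) - 1)) *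
          ProbabilityTheory.variance (unitVectorEstimator n N A)
            (withReplacementMeasure n N)) ∧
    (N = 1 →
      ProbabilityTheory.variance (fun f => unitVectorEstimator n N A f.1)
          (withoutReplacementMeasure n N)
        = ProbabilityTheory.variance (unitVectorEstimator n N A)
            (withReplacementMeasure n N)) ∧
    (N = n →
      ProbabilityTheory.variance (fun f => unitVectorEstimator n N A f.1)
          (withoutReplacementMeasure n N) = 0) := by
  set q : Fin n → ℝ := fun j ↦ unitVec n j ⬝ᵥ A *ᵥ unitVec n j
  set s := Var[q; uniformOn Set.univ]
  have : Nonempty (Fin n) := ⟨⟨0, by omega⟩⟩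
  have : Nonempty {f : Fin N → Fin n // Function.Injective f} :=
    ⟨⟨Fin.castLE hNn, Fin.castLE_injective hNn⟩⟩
  have hest : unitVectorEstimator n N A
      = fun f ↦ 1 / (Fintype.card (Fin N) : ℝ) * ∑ i, q (f i) := by
    rw [Fintype.card_fin]
    rfl
  have hU₁ : Var[unitVectorEstimator n N A; withReplacementMeasure n N] = s / N := by
    rw [withReplacementMeasure, inv_card_smul_count_eq_uniformOn_univ, hest,
      variance_average_of_covariance_eq _ (fun _ ↦ .of_discrete) (fun i ↦ variance_apply_pi i q)
        fun i j hij ↦ covariance_apply_apply_pi hij q, Fintype.card_fin, mul_zero, add_zero]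
  have hU₂ : Var[fun f ↦ unitVectorEstimator n N A f.1; withoutReplacementMeasure n N]
      = (s + (N - 1) * (-s / (n - 1))) / N := by
    rw [withoutReplacementMeasure, inv_card_smul_count_eq_uniformOn_univ, hest,
      variance_average_of_covariance_eq _ (fun _ ↦ .of_discrete)
        (fun i ↦ variance_apply_injective i q) fun i j hij ↦ covariance_apply_apply_injective hij q,
      Fintype.card_fin, Fintype.card_fin]
  have hn₁ : (n : ℝ) - 1 ≠ 0 := sub_ne_zero.mpr (Nat.cast_ne_one.mpr (by omega))
  have hrelation : Var[fun f ↦ unitVectorEstimator n N A f.1; withoutReplacementMeasure n N]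
      = (n - N) / (n - 1) * Var[unitVectorEstimator n N A; withReplacementMeasure n N] := by
    rw [hU₁, hU₂]
    field_simp
    ring
  refine ⟨hrelation, fun hN ↦ ?_, fun hN ↦ ?_⟩ <;> subst hN <;> simp [hrelation, hn₁]

/-- the variances of the unit vector trace estimators without and with
replacement are related by `Var(tr_{U₂}^N(A)) = ((n−N)/(n−1)) Var(tr_{U₁}^N(A))`; in
particular they coincide when `N = 1`, and the without-replacement variance vanishes
when `N = n`. -/
theorem unit_vector_variance_relation (n N : ℕ) (A : Matrix (Fin n) (Fin n) ℝ)
    (hn : 2 ≤ n) (hN : 1 ≤ N) (hNn : N ≤ n) :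
    (ProbabilityTheory.variance (fun f => unitVectorEstimator n N A f.1)
        (withoutReplacementMeasure n N)
      = (((n : ℝ) - N) / ((n : ℝ) - 1)) *
          ProbabilityTheory.variance (unitVectorEstimator n N A)
            (withReplacementMeasure n N)) ∧
    (N = 1 →
      ProbabilityTheory.variance (fun f => unitVectorEstimator n N A f.1)
          (withoutReplacementMeasure n N)
        = ProbabilityTheory.variance (unitVectorEstimator n N A)
            (withReplacementMeasure n N)) ∧
    (N = n →
      ProbabilityTheory.variance (fun f => unitVectorEstimator n N A f.1)
          (withoutReplacementMeasure n N) = 0) :=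
  unit_vector_variance_relation_general n N A hn hNn
end

section
/- Let A be an n×n real symmetric positive semi-definite matrix with tr(A) > 0 and eigenvalues λ_1, …, λ_n ≥ 0. For the Gaussian trace estimator and any t > 0 with 2λ_j t < 1 for all j, the lower-tail probability satisfies Pr( tr_G^N(A) ≤ (1−ε) tr(A) ) ≤ exp{ t N (1−ε) tr(A) } · Π_{j=1}^n (1 + 2 λ_j t)^{−N/2}, for any ε ∈ (0,1). -/
open MeasureTheory Matrix

/-- The Gaussian trace estimator `tr_G^N(A) = (1/N) ∑ᵢ wᵢᵗ A wᵢ`, where the `N`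
Gaussian vectors `wᵢ` are encoded by a point `ω` of the sample space
`Fin N → Fin n → ℝ`. -/
noncomputable def gaussianEstimator (n N : ℕ) (A : Matrix (Fin n) (Fin n) ℝ)
    (ω : Fin N → Fin n → ℝ) : ℝ :=
  (1 / (N : ℝ)) * ∑ i : Fin N, (ω i) ⬝ᵥ A.mulVec (ω i)

/-- The law of `N` independent random vectors in `ℝⁿ`, each with i.i.d. standard
normal components. -/
noncomputable def gaussianVectorsMeasure (n N : ℕ) : Measure (Fin N → Fin n → ℝ) :=
  Measure.pi fun _ : Fin N => Measure.pi fun _ : Fin n => ProbabilityTheory.gaussianReal 0 1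

/-! Chernoff's method. For `t ≥ 0`, Markov's inequality applied to `exp (-t ∑ᵢ wᵢᵀ A wᵢ)` bounds
the probability by `exp (t N (1 - ε) tr A)` times the `N`-th power of `𝔼 exp (-t wᵀ A w)`.
The coordinates `z` of a standard Gaussian vector `w` in an orthonormal eigenbasis of `A` are again
i.i.d. standard Gaussian and `wᵀ A w = ∑ⱼ λⱼ zⱼ²`, so this expectation is
`∏ⱼ 𝔼 exp (-t λⱼ z²) = ∏ⱼ (1 + 2 λⱼ t)^(-1/2)`. -/

open Real ProbabilityTheory WithLp
open scoped ENNReal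

lemma measure_le_le_exp_mul_lintegral_exp_neg {Ω : Type*} [MeasurableSpace Ω] (μ : Measure Ω)
    {f : Ω → ℝ} (hf : Measurable f) {t : ℝ} (ht : 0 ≤ t) (a : ℝ) :
    μ {ω | f ω ≤ a} ≤
      ENNReal.ofReal (exp (t * a)) * ∫⁻ ω, ENNReal.ofReal (exp (-(t * f ω))) ∂μ := by
  rw [← lintegral_const_mul _ (by fun_prop)]
  calc μ {ω | f ω ≤ a}
      ≤ μ {ω | 1 ≤ ENNReal.ofReal (exp (t * a)) * ENNReal.ofReal (exp (-(t * f ω)))} := by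
        refine measure_mono fun ω (hω : f ω ≤ a) => ?_
        rw [Set.mem_ofPred_eq, ← ENNReal.ofReal_mul (exp_pos _).le, ← exp_add,
          ENNReal.one_le_ofReal, one_le_exp_iff]
        nlinarith
    _ ≤ ∫⁻ ω, ENNReal.ofReal (exp (t * a)) * ENNReal.ofReal (exp (-(t * f ω))) ∂μ := by
        simpa using mul_meas_ge_le_lintegral₀ (μ := μ) (by fun_prop) 1

lemma lintegral_pi_prod {ι : Type*} [Fintype ι] {Ω : ι → Type*} [∀ i, MeasurableSpace (Ω i)]
    (μ : ∀ i, Measure (Ω i)) [∀ i, IsProbabilityMeasure (μ i)] {f : ∀ i, Ω i → ℝ≥0∞}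
    (hf : ∀ i, Measurable (f i)) :
    ∫⁻ ω, ∏ i, f i (ω i) ∂Measure.pi μ = ∏ i, ∫⁻ x, f i x ∂μ i := by
  rw [lintegral_prod_eq_prod_lintegral_of_indepFun _ _
    (iIndepFun_pi fun i => (hf i).aemeasurable) fun i => (hf i).comp (measurable_pi_apply i)]
  exact Finset.prod_congr rfl fun i _ => (measurePreserving_eval μ i).lintegral_comp (hf i)

lemma lintegral_exp_sum_pi {ι : Type*} [Fintype ι] {Ω : ι → Type*} [∀ i, MeasurableSpace (Ω i)]
    (μ : ∀ i, Measure (Ω i)) [∀ i, IsProbabilityMeasure (μ i)] {g : ∀ i, Ω i → ℝ}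
    (hg : ∀ i, Measurable (g i)) :
    ∫⁻ ω, ENNReal.ofReal (exp (∑ i, g i (ω i))) ∂Measure.pi μ =
      ∏ i, ∫⁻ x, ENNReal.ofReal (exp (g i x)) ∂μ i := by
  simp_rw [exp_sum, ENNReal.ofReal_prod_of_nonneg fun i _ => (exp_pos _).le]
  exact lintegral_pi_prod μ fun i => (hg i).exp.ennreal_ofReal

lemma lintegral_exp_neg_mul_sq_gaussianReal {c : ℝ} (hc : 0 < 1 + 2 * c) :
    ∫⁻ x, ENNReal.ofReal (exp (-(c * x ^ 2))) ∂gaussianReal 0 1 =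
      ENNReal.ofReal ((1 + 2 * c) ^ (-(1 : ℝ) / 2)) := by
  have hdensity : ∀ x, gaussianPDF 0 1 x * ENNReal.ofReal (exp (-(c * x ^ 2))) =
      ENNReal.ofReal ((√(2 * π))⁻¹ * exp (-((1 + 2 * c) / 2) * x ^ 2)) := by
    intro x
    simp only [gaussianPDF, gaussianPDFReal, NNReal.coe_one, mul_one, sub_zero]
    rw [← ENNReal.ofReal_mul (by positivity), mul_assoc, ← exp_add]
    congr 3
    ring
  rw [gaussianReal_of_var_ne_zero 0 one_ne_zero,
    lintegral_withDensity_eq_lintegral_mul _ (measurable_gaussianPDF 0 1) (by fun_prop)]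
  simp only [Pi.mul_apply, hdensity]
  rw [← ofReal_integral_eq_lintegral_ofReal
    ((integrable_exp_neg_mul_sq (by linarith)).const_mul _) (.of_forall fun _ => by positivity),
    integral_const_mul, integral_gaussian, neg_div, rpow_neg hc.le, ← sqrt_eq_rpow,
    ← sqrt_inv, ← sqrt_mul (by positivity), ← sqrt_inv]
  congr 2
  field_simp

lemma map_sum_smul_orthonormalBasis_gaussian_pi {ι : Type*} [Fintype ι]
    (b : OrthonormalBasis ι ℝ (EuclideanSpace ℝ ι)) :
    (Measure.pi fun _ : ι => gaussianReal 0 1).map (fun x => ofLp (∑ i, x i • b i)) =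
      Measure.pi fun _ : ι => gaussianReal 0 1 := by
  calc (Measure.pi fun _ : ι => gaussianReal 0 1).map (ofLp ∘ fun x => ∑ i, x i • b i)
      = ((Measure.pi fun _ : ι => gaussianReal 0 1).map fun x => ∑ i, x i • b i).map ofLp :=
        (Measure.map_map (by fun_prop) (by fun_prop)).symm
    _ = ((Measure.pi fun _ : ι => gaussianReal 0 1).map (toLp 2)).map ofLp := by
        rw [← stdGaussian_eq_map_pi_orthonormalBasis, map_pi_eq_stdGaussian]
    _ = Measure.pi fun _ : ι => gaussianReal 0 1 := by
        rw [Measure.map_map (by fun_prop) (by fun_prop)]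
        exact Measure.map_id

lemma Matrix.IsHermitian.dotProduct_mulVec_sum_smul_eigenvectorBasis {ι : Type*} [Fintype ι]
    [DecidableEq ι] {A : Matrix ι ι ℝ} (hA : A.IsHermitian) (x : ι → ℝ) :
    ofLp (∑ i, x i • hA.eigenvectorBasis i) ⬝ᵥ A *ᵥ ofLp (∑ i, x i • hA.eigenvectorBasis i) =
      ∑ i, hA.eigenvalues i * x i ^ 2 := by
  set v := ∑ i, x i • hA.eigenvectorBasis i
  have hAv : A *ᵥ ofLp v = ∑ i, (x i * hA.eigenvalues i) • ofLp (hA.eigenvectorBasis i) := by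
    simp [v, mulVec_sum, mulVec_smul, hA.mulVec_eigenvectorBasis, smul_smul]
  rw [hAv, dotProduct_sum]
  refine Finset.sum_congr rfl fun i _ => ?_
  have hvi := hA.eigenvectorBasis.orthonormal.inner_left_fintype x i
  rw [EuclideanSpace.inner_eq_star_dotProduct, star_trivial, conj_trivial, dotProduct_comm] at hvi
  rw [dotProduct_smul, hvi, smul_eq_mul]
  ring

lemma Matrix.IsHermitian.lintegral_exp_neg_mul_dotProduct_mulVec_gaussian {ι : Type*}
    [Fintype ι] [DecidableEq ι] {A : Matrix ι ι ℝ} (hA : A.IsHermitian) {t : ℝ}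
    (ht : ∀ j, 0 < 1 + 2 * hA.eigenvalues j * t) :
    ∫⁻ w, ENNReal.ofReal (Real.exp (-(t * (w ⬝ᵥ A *ᵥ w))))
        ∂(Measure.pi fun _ : ι => gaussianReal 0 1) =
      ENNReal.ofReal (∏ j, (1 + 2 * hA.eigenvalues j * t) ^ (-(1 : ℝ) / 2)) := by
  rw [← map_sum_smul_orthonormalBasis_gaussian_pi hA.eigenvectorBasis,
    lintegral_map (by fun_prop) (by fun_prop)]
  simp_rw [hA.dotProduct_mulVec_sum_smul_eigenvectorBasis, Finset.mul_sum,
    ← Finset.sum_neg_distrib]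
  rw [lintegral_exp_sum_pi (g := fun j x => -(t * (hA.eigenvalues j * x ^ 2))) _
    fun j => by fun_prop, ENNReal.ofReal_prod_of_nonneg fun j _ => rpow_nonneg (ht j).le _]
  refine Finset.prod_congr rfl fun j _ => ?_
  simp_rw [← mul_assoc]
  rw [lintegral_exp_neg_mul_sq_gaussianReal (by linarith [ht j])]
  congr 3
  ring

lemma sum_dotProduct_mulVec_le_of_gaussianEstimator_le {n N : ℕ} {A : Matrix (Fin n) (Fin n) ℝ}
    {ω : Fin N → Fin n → ℝ} {a : ℝ} (h : gaussianEstimator n N A ω ≤ a) :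
    ∑ i, ω i ⬝ᵥ A *ᵥ ω i ≤ N * a := by
  rcases N.eq_zero_or_pos with rfl | hN
  · simp
  · rwa [gaussianEstimator, one_div, inv_mul_le_iff₀ (by positivity)] at h

theorem gaussian_lower_tail_mgf_bound_general (n N : ℕ) (A : Matrix (Fin n) (Fin n) ℝ)
    (hA : A.PosSemidef)
    (t : ℝ) (ht : 0 < t)
    (ε : ℝ) :
    gaussianVectorsMeasure n N
        {ω | gaussianEstimator n N A ω ≤ (1 - ε) * A.trace}
      ≤ ENNReal.ofReal (Real.exp (t * N * (1 - ε) * A.trace) *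
          ∏ j : Fin n, (1 + 2 * hA.1.eigenvalues j * t) ^ (-(N : ℝ) / 2)) := by
  have hpos : ∀ j, 0 < 1 + 2 * hA.1.eigenvalues j * t := fun j => by
    nlinarith [hA.eigenvalues_nonneg j]
  have hmgf := hA.1.lintegral_exp_neg_mul_dotProduct_mulVec_gaussian hpos
  calc gaussianVectorsMeasure n N {ω | gaussianEstimator n N A ω ≤ (1 - ε) * A.trace}
      ≤ gaussianVectorsMeasure n N {ω | ∑ i, ω i ⬝ᵥ A *ᵥ ω i ≤ N * ((1 - ε) * A.trace)} :=
        measure_mono fun _ => sum_dotProduct_mulVec_le_of_gaussianEstimator_le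
    _ ≤ ENNReal.ofReal (exp (t * N * (1 - ε) * A.trace)) *
          ∫⁻ ω, ENNReal.ofReal (exp (-(t * ∑ i, ω i ⬝ᵥ A *ᵥ ω i))) ∂gaussianVectorsMeasure n N := by
        rw [show t * N * (1 - ε) * A.trace = t * (N * ((1 - ε) * A.trace)) by ring]
        exact measure_le_le_exp_mul_lintegral_exp_neg _ (by fun_prop) ht.le _
    _ = ENNReal.ofReal (exp (t * N * (1 - ε) * A.trace)) *
          ENNReal.ofReal (∏ j, (1 + 2 * hA.1.eigenvalues j * t) ^ (-(1 : ℝ) / 2)) ^ N := by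
        simp_rw [gaussianVectorsMeasure, Finset.mul_sum, ← Finset.sum_neg_distrib]
        rw [lintegral_exp_sum_pi (g := fun _ w => -(t * (w ⬝ᵥ A *ᵥ w))) _ fun _ => by fun_prop,
          Finset.prod_const, Finset.card_univ, Fintype.card_fin, hmgf]
    _ = _ := by
        rw [← ENNReal.ofReal_pow (Finset.prod_nonneg fun j _ => rpow_nonneg (hpos j).le _),
          ← ENNReal.ofReal_mul (exp_pos _).le, ← Finset.prod_pow]
        refine congrArg _ (congrArg _ (Finset.prod_congr rfl fun j _ => ?_))
        rw [← rpow_mul_natCast (hpos j).le]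
        congr 1
        ring

/-- Chernoff-type lower-tail bound for the Gaussian trace estimator.
For any `t > 0` with `2 λⱼ t < 1` for all eigenvalues `λⱼ` of the SPSD matrix `A`, and
any `ε ∈ (0,1)`,
`Pr(tr_G^N(A) ≤ (1−ε) tr(A)) ≤ exp{t N (1−ε) tr(A)} ∏ⱼ (1 + 2 λⱼ t)^{−N/2}`. -/
theorem gaussian_lower_tail_mgf_bound (n N : ℕ) (A : Matrix (Fin n) (Fin n) ℝ)
    (hA : A.PosSemidef) (htr : 0 < A.trace)
    (t : ℝ) (ht : 0 < t) (hlamt : ∀ j : Fin n, 2 * hA.1.eigenvalues j * t < 1)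
    (ε : ℝ) (hε : ε ∈ Set.Ioo (0 : ℝ) 1) :
    gaussianVectorsMeasure n N
        {ω | gaussianEstimator n N A ω ≤ (1 - ε) * A.trace}
      ≤ ENNReal.ofReal (Real.exp (t * N * (1 - ε) * A.trace) *
          ∏ j : Fin n, (1 + 2 * hA.1.eigenvalues j * t) ^ (-(N : ℝ) / 2)) :=
  gaussian_lower_tail_mgf_bound_general n N A hA t ht ε
end
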